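/- Let 1<α<2 and α−1<β<1. Then there exists a constant C > 0, depending only on α, β, K_m, K_M, such that for every measurable K:[0,1]→ℝ with 0<K_m≤K(x)≤K_M and every measurable f:(0,1)→ℝ with ‖f‖_{ω^{(β,α−β)}} < ∞, the constant A := ( ∫₀¹ ω^{(β−1,α−β−1)}(x)·(1/K(x))·(∫₀^x f(y)dy) dx ) / ( ∫₀¹ ω^{(β−1,α−β−1)}(x)·(1/K(x)) dx ) satisfies |A| ≤ C·‖f‖_{ω^{(β,α−β)}}. -/

import Mathlib

open MeasureTheory Real Filter

/-- The weight function ω^{(a,b)}(x) = (1-x)^a x^b. -/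
noncomputable def jw (a b x : ℝ) : ℝ := (1 - x) ^ a * x ^ b

/-- The weighted L² norm ‖g‖_{ω^{(a,b)}}. -/
noncomputable def jwNorm (a b : ℝ) (g : ℝ → ℝ) : ℝ :=
  Real.sqrt (∫ x in (0:ℝ)..1, jw a b x * g x ^ 2)

/-- The Beta function B(a,b) = Γ(a)Γ(b)/Γ(a+b). -/
noncomputable def Betaf (a b : ℝ) : ℝ :=
  Real.Gamma a * Real.Gamma b / Real.Gamma (a + b)

/-- Generalized binomial coefficient binom(x,k) = Γ(x+1)/(Γ(k+1)Γ(x-k+1)). -/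
noncomputable def rbinom (x : ℝ) (k : ℕ) : ℝ :=
  Real.Gamma (x + 1) / (Real.Gamma ((k : ℝ) + 1) * Real.Gamma (x - (k : ℝ) + 1))

/-- Jacobi polynomial on [0,1]: G_n^{(a,b)}(t). -/
noncomputable def JacobiG (n : ℕ) (a b : ℝ) (t : ℝ) : ℝ :=
  ∑ m ∈ Finset.range (n + 1),
    (2 : ℝ) ^ (-(n : ℝ)) * rbinom ((n : ℝ) + a) m * rbinom ((n : ℝ) + b) (n - m) *
      (2 * t - 2) ^ (n - m) * (2 * t) ^ m

/-- The weighted norm value |‖G_n^{(a,b)}‖|. -/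
noncomputable def GNormVal (n : ℕ) (a b : ℝ) : ℝ :=
  Real.sqrt (Real.Gamma ((n : ℝ) + a + 1) * Real.Gamma ((n : ℝ) + b + 1) /
    ((2 * (n : ℝ) + a + b + 1) * Real.Gamma ((n : ℝ) + 1) * Real.Gamma ((n : ℝ) + a + b + 1)))

/-- Jacobi coefficient of g with respect to G_j^{(a,b)} in L²_{ω^{(a,b)}}. -/
noncomputable def jcoeff (a b : ℝ) (g : ℝ → ℝ) (j : ℕ) : ℝ :=
  (∫ x in (0:ℝ)..1, jw a b x * g x * JacobiG j a b x) / GNormVal j a b ^ 2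

/-- Left Riemann-Liouville fractional integral (₀I_x^σ g)(x). -/
noncomputable def leftI (σ : ℝ) (g : ℝ → ℝ) (x : ℝ) : ℝ :=
  (1 / Real.Gamma σ) * ∫ s in (0:ℝ)..x, g s * (x - s) ^ (σ - 1)

/-- Right Riemann-Liouville fractional integral (ₓI₁^σ g)(x). -/
noncomputable def rightI (σ : ℝ) (g : ℝ → ℝ) (x : ℝ) : ℝ :=
  (1 / Real.Gamma σ) * ∫ s in x..(1:ℝ), g s * (s - x) ^ (σ - 1)

/-- The eigenvalues λ_n = (sin(πα)/(sin(π(α-β)) + sin(πβ)))·Γ(n+α)/n!. -/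
noncomputable def lamCoef (α β : ℝ) (n : ℕ) : ℝ :=
  (Real.sin (π * α) / (Real.sin (π * (α - β)) + Real.sin (π * β))) *
    Real.Gamma ((n : ℝ) + α) / (Nat.factorial n : ℝ)

/-- f₁(x) = (1/K(x))·∫₀ˣ f(y) dy. -/
noncomputable def fOne (K f : ℝ → ℝ) (x : ℝ) : ℝ := (1 / K x) * ∫ y in (0:ℝ)..x, f y

/-- f₂(x) = 1/K(x). -/
noncomputable def fTwo (K : ℝ → ℝ) (x : ℝ) : ℝ := 1 / K x

/-- The Jacobi coefficients f_{k,j} of f₁ (k = 1) and f₂ (k = 2) w.r.t. G_j^{(β-1,α-β-1)}. -/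
noncomputable def fCoef (α β : ℝ) (K f : ℝ → ℝ) (k : ℕ) (j : ℕ) : ℝ :=
  jcoeff (β - 1) (α - β - 1) (if k = 1 then fOne K f else fTwo K) j

/-- The constant A = f_{1,0}/f_{2,0}. -/
noncomputable def Aconst (α β : ℝ) (K f : ℝ → ℝ) : ℝ :=
  fCoef α β K f 1 0 / fCoef α β K f 2 0

/-- The solution coefficients c_j = (−f_{1,j+1} + A·f_{2,j+1})/λ_j. -/
noncomputable def cCoef (α β : ℝ) (K f : ℝ → ℝ) (j : ℕ) : ℝ :=
  (-(fCoef α β K f 1 (j + 1)) + Aconst α β K f * fCoef α β K f 2 (j + 1)) / lamCoef α β j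

/-! The constant `A` is an average of the primitive `F x = ∫₀ˣ f` against the nonnegative weight
`ω^{(β-1,α-β-1)} / K`, so `|A| ≤ sup_{[0,1]} |F| ≤ ∫₀¹ |f|`. Since
`ω^{(β,α-β)} · ω^{(-β,β-α)} = 1`, Cauchy–Schwarz (integrated AM-GM, optimised in `ε`) gives
`∫₀¹ |f| ≤ ‖f‖_{ω^{(β,α-β)}} · (∫₀¹ ω^{(-β,β-α)})^{1/2}`, and this last integral is finite
because `α - 1 < β < 1`. -/

open Set intervalIntegral

section JacobiWeight

variable {x : ℝ}

lemma jw_nonneg (a b : ℝ) (hx : x ∈ Icc (0 : ℝ) 1) : 0 ≤ jw a b x :=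
  mul_nonneg (rpow_nonneg (by linarith [hx.2]) _) (rpow_nonneg hx.1 _)

lemma jw_pos (a b : ℝ) (hx : x ∈ Ioo (0 : ℝ) 1) : 0 < jw a b x :=
  mul_pos (rpow_pos_of_pos (by linarith [hx.2]) _) (rpow_pos_of_pos hx.1 _)

lemma jw_mul_jw_neg (a b : ℝ) (hx : x ∈ Ioo (0 : ℝ) 1) : jw a b x * jw (-a) (-b) x = 1 := by
  have h1x : 0 < 1 - x := by linarith [hx.2]
  rw [jw, jw, mul_mul_mul_comm, ← rpow_add h1x, ← rpow_add hx.1]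
  simp

lemma intervalIntegrable_jw {a b : ℝ} (ha : -1 < a) (hb : -1 < b) :
    IntervalIntegrable (jw a b) volume 0 1 := by
  have hleft : IntervalIntegrable (jw a b) volume 0 (1 / 2) := by
    refine (intervalIntegrable_rpow' hb).continuousOn_mul fun x hx => ?_
    rw [uIcc_of_le (by norm_num)] at hx
    exact ((continuous_const.sub continuous_id).continuousAt.rpow_const
      (Or.inl (by simp only [Pi.sub_apply, id]; linarith [hx.2]))).continuousWithinAt
  have hright : IntervalIntegrable (jw a b) volume (1 / 2) 1 := by
    have h := (intervalIntegrable_rpow' (a := 0) (b := 1 / 2) ha).comp_sub_left 1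
    norm_num at h
    refine h.symm.mul_continuousOn fun x hx => ?_
    rw [uIcc_of_le (by norm_num)] at hx
    exact (continuousAt_id.rpow_const
      (Or.inl (by simp only [id]; linarith [hx.1]))).continuousWithinAt
  exact hleft.trans hright

end JacobiWeight

lemma abs_le_amgm_of_mul_eq_one {ε p q r : ℝ} (hε : 0 < ε) (hp : 0 < p) (hpq : p * q = 1) :
    |r| ≤ (ε * (p * r ^ 2) + ε⁻¹ * q) / 2 := by
  obtain rfl : q = p⁻¹ := eq_inv_of_mul_eq_one_right hpq
  have hsq : (ε * (p * r ^ 2) + ε⁻¹ * p⁻¹) / 2 - |r| =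
      (ε * p * |r| - 1) ^ 2 / (2 * (ε * p)) := by
    field_simp
    ring_nf
    rw [sq_abs]
  have hsq_nonneg : 0 ≤ (ε * p * |r| - 1) ^ 2 / (2 * (ε * p)) := by positivity
  linarith

lemma le_sqrt_mul_sqrt_of_forall_le {A B X : ℝ} (hB : 0 < B)
    (h : ∀ ε > 0, X ≤ (ε * A + ε⁻¹ * B) / 2) : X ≤ √A * √B := by
  rcases le_or_gt A 0 with hA | hA
  · rw [sqrt_eq_zero'.2 hA, zero_mul]
    by_contra! hX
    have hBX := h (B / X) (div_pos hB hX)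
    rw [inv_div, div_mul_cancel₀ X hB.ne'] at hBX
    nlinarith [div_pos hB hX]
  · calc X ≤ (√B / √A * A + (√B / √A)⁻¹ * B) / 2 := h _ (by positivity)
      _ = √A * √B := by
        have hA' : 0 < √A := sqrt_pos.2 hA
        have hB' : 0 < √B := sqrt_pos.2 hB
        field_simp
        rw [sq_sqrt hA.le, sq_sqrt hB.le]
        ring

section WeightedL1

variable {a b : ℝ} {w v f : ℝ → ℝ}

lemma IntervalIntegrable.of_mul_sq (hab : a ≤ b) (hf : AEStronglyMeasurable f volume)
    (hwf : IntervalIntegrable (fun x => w x * f x ^ 2) volume a b)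
    (hv : IntervalIntegrable v volume a b) (hw : ∀ x ∈ Ioo a b, 0 < w x)
    (hwv : ∀ x ∈ Ioo a b, w x * v x = 1) : IntervalIntegrable f volume a b := by
  rw [intervalIntegrable_iff_integrableOn_Ioo_of_le hab] at hwf hv ⊢
  refine Integrable.mono' (hwf.add hv) hf.restrict ?_
  filter_upwards [self_mem_ae_restrict measurableSet_Ioo] with x hx
  have hamgm := abs_le_amgm_of_mul_eq_one (r := f x) one_pos (hw x hx) (hwv x hx)
  have hwf_nonneg : 0 ≤ w x * f x ^ 2 := mul_nonneg (hw x hx).le (sq_nonneg _)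
  have hv_pos : 0 < v x := pos_of_mul_pos_right ((hwv x hx).symm ▸ one_pos) (hw x hx).le
  rw [norm_eq_abs, Pi.add_apply]
  linarith

lemma integral_abs_le_sqrt_mul_sqrt (hab : a < b) (hf : AEStronglyMeasurable f volume)
    (hwf : IntervalIntegrable (fun x => w x * f x ^ 2) volume a b)
    (hv : IntervalIntegrable v volume a b) (hw : ∀ x ∈ Ioo a b, 0 < w x)
    (hwv : ∀ x ∈ Ioo a b, w x * v x = 1) :
    ∫ x in a..b, |f x| ≤ √(∫ x in a..b, w x * f x ^ 2) * √(∫ x in a..b, v x) := by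
  have hfi := IntervalIntegrable.of_mul_sq hab.le hf hwf hv hw hwv
  have hv_pos : 0 < ∫ x in a..b, v x := intervalIntegral_pos_of_pos_on hv
    (fun x hx => pos_of_mul_pos_right ((hwv x hx).symm ▸ one_pos) (hw x hx).le) hab
  refine le_sqrt_mul_sqrt_of_forall_le hv_pos fun ε hε => ?_
  have hbound := ((hwf.const_mul ε).add (hv.const_mul ε⁻¹)).div_const 2
  calc ∫ x in a..b, |f x| ≤ ∫ x in a..b, (ε * (w x * f x ^ 2) + ε⁻¹ * v x) / 2 :=
        integral_mono_on_of_le_Ioo hab.le hfi.abs hbound fun x hx =>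
          abs_le_amgm_of_mul_eq_one hε (hw x hx) (hwv x hx)
    _ = _ := by
      rw [intervalIntegral.integral_div, integral_add (hwf.const_mul ε) (hv.const_mul ε⁻¹),
        intervalIntegral.integral_const_mul, intervalIntegral.integral_const_mul]

lemma abs_integral_le_integral_abs_of_mem_Icc {x : ℝ} (hx : x ∈ Icc a b)
    (hf : IntervalIntegrable f volume a b) : |∫ y in a..x, f y| ≤ ∫ y in a..b, |f y| :=
  (abs_integral_le_integral_abs hx.1).trans
    (integral_mono_interval le_rfl hx.1 hx.2 (ae_of_all _ fun _ => abs_nonneg _) hf.abs)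

end WeightedL1

-- Divergent integrals are `0` in Lean; then the quotient is `0` and the bound is trivial.
lemma abs_integral_mul_div_integral_le {a b M : ℝ} {w F : ℝ → ℝ} (hab : a ≤ b)
    (hw : ∀ x ∈ Icc a b, 0 ≤ w x) (hF : ∀ x ∈ Icc a b, |F x| ≤ M) :
    |(∫ x in a..b, w x * F x) / ∫ x in a..b, w x| ≤ M := by
  have hM : 0 ≤ M := (abs_nonneg _).trans (hF a (left_mem_Icc.2 hab))
  by_cases hwi : IntervalIntegrable w volume a b
  swap
  · rw [integral_undef hwi, div_zero, abs_zero]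
    exact hM
  by_cases hwFi : IntervalIntegrable (fun x => w x * F x) volume a b
  swap
  · rw [integral_undef hwFi, zero_div, abs_zero]
    exact hM
  have hw_int : 0 ≤ ∫ x in a..b, w x := integral_nonneg hab hw
  rw [abs_div, abs_of_nonneg hw_int]
  refine div_le_of_le_mul₀ hw_int hM ?_
  calc |∫ x in a..b, w x * F x| ≤ ∫ x in a..b, |w x * F x| := abs_integral_le_integral_abs hab
    _ ≤ ∫ x in a..b, M * w x := integral_mono_on hab hwFi.abs (hwi.const_mul M) fun x hx => by
        rw [abs_mul, abs_of_nonneg (hw x hx), mul_comm]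
        exact mul_le_mul_of_nonneg_right (hF x hx) (hw x hx)
    _ = M * ∫ x in a..b, w x := intervalIntegral.integral_const_mul M _

theorem stmt11_general (α β Km KM : ℝ) (hβ : α - 1 < β ∧ β < 1)
    (hKm : 0 < Km) :
    ∃ C > 0, ∀ K f : ℝ → ℝ, Measurable K →
      (∀ x ∈ Set.Icc (0:ℝ) 1, Km ≤ K x ∧ K x ≤ KM) →
      Measurable f →
      IntervalIntegrable (fun x => jw β (α - β) x * f x ^ 2) MeasureTheory.volume 0 1 →
      |(∫ x in (0:ℝ)..1, jw (β - 1) (α - β - 1) x * (1 / K x) * ∫ y in (0:ℝ)..x, f y) /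
          (∫ x in (0:ℝ)..1, jw (β - 1) (α - β - 1) x * (1 / K x))| ≤
        C * jwNorm β (α - β) f := by
  have hv : IntervalIntegrable (jw (-β) (-(α - β))) volume 0 1 :=
    intervalIntegrable_jw (by linarith) (by linarith)
  refine ⟨√(∫ x in (0:ℝ)..1, jw (-β) (-(α - β)) x),
    sqrt_pos.2 (intervalIntegral_pos_of_pos_on hv (fun x hx => jw_pos _ _ hx) one_pos), ?_⟩
  intro K f _ hK hf hwf
  have hf_int : IntervalIntegrable f volume 0 1 :=
    hwf.of_mul_sq zero_le_one hf.aestronglyMeasurable hv (fun x => jw_pos _ _)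
      (fun x => jw_mul_jw_neg _ _)
  have hL1 := integral_abs_le_sqrt_mul_sqrt one_pos hf.aestronglyMeasurable hwf hv
    (fun x => jw_pos _ _) (fun x => jw_mul_jw_neg _ _)
  refine abs_integral_mul_div_integral_le (w := fun x => jw (β - 1) (α - β - 1) x * (1 / K x))
    zero_le_one (fun x hx => mul_nonneg (jw_nonneg _ _ hx) ?_) fun x hx => ?_
  · exact one_div_nonneg.2 (hKm.le.trans (hK x hx).1)
  · rw [mul_comm, jwNorm]
    exact (abs_integral_le_integral_abs_of_mem_Icc hx hf_int).trans hL1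

/-- bound on the constant A in terms of the weighted norm of f. -/
theorem stmt11 (α β Km KM : ℝ) (hα : 1 < α ∧ α < 2) (hβ : α - 1 < β ∧ β < 1)
    (hKm : 0 < Km) (hKmM : Km ≤ KM) :
    ∃ C > 0, ∀ K f : ℝ → ℝ, Measurable K →
      (∀ x ∈ Set.Icc (0:ℝ) 1, Km ≤ K x ∧ K x ≤ KM) →
      Measurable f →
      IntervalIntegrable (fun x => jw β (α - β) x * f x ^ 2) MeasureTheory.volume 0 1 →
      |(∫ x in (0:ℝ)..1, jw (β - 1) (α - β - 1) x * (1 / K x) * ∫ y in (0:ℝ)..x, f y) /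
          (∫ x in (0:ℝ)..1, jw (β - 1) (α - β - 1) x * (1 / K x))| ≤
        C * jwNorm β (α - β) f :=
  stmt11_general α β Km KM hβ hKm
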